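/- arXiv:0903.2201 — 4 statements merged into one kernel-verified Lean document; each statement's English description precedes it below -/
import Mathlib

section
/- If a graph G contains two distinct nonempty subsets A, A' ⊆ V(G) of the same size a such that |B(A) △ B(A')| ≤ 2r, then f(G) ≤ 2a + 2r, where B(A) = {x ∉ A : x has an odd number of neighbors in A} and f(G) = min over nonempty subsets S of |S| + |B(S)|. -/
open scoped symmDiff

/-- `oddNbrs G A` is the set `B(A)` of vertices outside `A` with an odd
number of neighbors in `A`. -/
def oddNbrs {V : Type*} [Fintype V] [DecidableEq V]
    (G : SimpleGraph V) [DecidableRel G.Adj] (A : Finset V) : Finset V :=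
  Finset.univ.filter (fun x => x ∉ A ∧ Odd ((A.filter (G.Adj x)).card))

/-!
Take `S = A ∆ A'`, which is nonempty since `A ≠ A'`. A vertex outside `A ∪ A'` has as many
neighbours in `S` as in `A` and `A'` together, up to twice those in `A ∩ A'`; so it lies in
`B(S)` exactly when it lies in one of `B(A)`, `B(A')` but not the other. Hence
`B(S) ⊆ (A ∩ A') ∪ (B(A) ∆ B(A'))`, and `|S| + |A ∩ A'| = |A ∪ A'| ≤ 2a`.
-/

open Finset

namespace Finset

variable {α : Type*} [DecidableEq α] (s t : Finset α)

theorem card_symmDiff_add_card_inter : #(s ∆ t) + #(s ∩ t) = #(s ∪ t) :=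
  (card_union_of_disjoint (disjoint_symmDiff_inf s t)).symm.trans
    (congrArg card (symmDiff_sup_inf s t))

theorem odd_card_symmDiff_iff : Odd #(s ∆ t) ↔ Odd (#s + #t) := by
  have h : #(s ∆ t) + 2 * #(s ∩ t) = #s + #t := by
    rw [← card_union_add_card_inter, ← card_symmDiff_add_card_inter]
    ring
  rw [← h, Nat.odd_add, iff_true_right (even_two_mul _)]

theorem filter_symmDiff (p : α → Prop) [DecidablePred p] :
    (s ∆ t).filter p = s.filter p ∆ t.filter p := by
  ext x
  simp only [mem_filter, mem_symmDiff]
  tauto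

end Finset

section OddNbrs

variable {V : Type*} [Fintype V] [DecidableEq V] (G : SimpleGraph V) [DecidableRel G.Adj]

theorem mem_oddNbrs_symmDiff_iff {A A' : Finset V} {x : V} (hxA : x ∉ A) (hxA' : x ∉ A') :
    x ∈ oddNbrs G (A ∆ A') ↔ x ∈ oddNbrs G A ∆ oddNbrs G A' := by
  simp only [oddNbrs, mem_filter, mem_univ, true_and, mem_symmDiff, filter_symmDiff,
    odd_card_symmDiff_iff, Nat.odd_add, ← Nat.not_odd_iff_even, hxA, hxA', not_false_eq_true]
  tauto

theorem oddNbrs_symmDiff_subset (A A' : Finset V) :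
    oddNbrs G (A ∆ A') ⊆ (A ∩ A') ∪ (oddNbrs G A ∆ oddNbrs G A') := by
  intro x hx
  have hxS : x ∉ A ∆ A' := (mem_filter.1 hx).2.1
  by_cases hxA : x ∈ A
  · exact mem_union_left _ (mem_inter.2 ⟨hxA, by simp_all [mem_symmDiff]⟩)
  · have hxA' : x ∉ A' := by simp_all [mem_symmDiff]
    exact mem_union_right _ ((mem_oddNbrs_symmDiff_iff G hxA hxA').1 hx)

end OddNbrs

theorem diag_dist_le_of_symmDiff_small_general {V : Type*} [Fintype V] [DecidableEq V]
    (G : SimpleGraph V) [DecidableRel G.Adj] (A A' : Finset V) (a r : ℕ)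
    (hne : A ≠ A')
    (hcard : A.card = a) (hcard' : A'.card = a)
    (hsd : ((oddNbrs G A) ∆ (oddNbrs G A')).card ≤ 2 * r) :
    ∃ S : Finset V, S.Nonempty ∧ S.card + (oddNbrs G S).card ≤ 2 * a + 2 * r := by
  refine ⟨A ∆ A', symmDiff_nonempty.2 hne, ?_⟩
  have hB : #(oddNbrs G (A ∆ A')) ≤ #(A ∩ A') + #(oddNbrs G A ∆ oddNbrs G A') :=
    (card_le_card (oddNbrs_symmDiff_subset G A A')).trans (card_union_le _ _)
  calc #(A ∆ A') + #(oddNbrs G (A ∆ A'))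
      ≤ #(A ∆ A') + #(A ∩ A') + #(oddNbrs G A ∆ oddNbrs G A') := by omega
    _ = #(A ∪ A') + #(oddNbrs G A ∆ oddNbrs G A') := by rw [card_symmDiff_add_card_inter]
    _ ≤ #A + #A' + 2 * r := add_le_add (card_union_le A A') hsd
    _ = 2 * a + 2 * r := by omega

/-- If `G` contains two distinct nonempty sets `A ≠ A'` with `|A| = |A'| = a` and
`|B(A) △ B(A')| ≤ 2r`, then `f(G) ≤ 2a + 2r`. -/
theorem diag_dist_le_of_symmDiff_small {V : Type*} [Fintype V] [DecidableEq V]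
    (G : SimpleGraph V) [DecidableRel G.Adj] (A A' : Finset V) (a r : ℕ)
    (hA : A.Nonempty) (hA' : A'.Nonempty) (hne : A ≠ A')
    (hcard : A.card = a) (hcard' : A'.card = a)
    (hsd : ((oddNbrs G A) ∆ (oddNbrs G A')).card ≤ 2 * r) :
    ∃ S : Finset V, S.Nonempty ∧ S.card + (oddNbrs G S).card ≤ 2 * a + 2 * r :=
  diag_dist_le_of_symmDiff_small_general G A A' a r hne hcard hcard' hsd
end

section
/- With g_λ(α) = H(α) + (1-α)(H((λ-α)/(1-α)) - 1) for 0 < α < λ < 1, the maximum of g_λ(α) over α ∈ (0, λ) is attained exactly at α = 2λ/3. -/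
/-- The binary entropy function. -/
noncomputable def binEnt (x : ℝ) : ℝ := -x * Real.logb 2 x - (1 - x) * Real.logb 2 (1 - x)

/-- `g_λ(α) = H(α) + (1-α)(H((λ-α)/(1-α)) - 1)`. -/
noncomputable def gFun (l a : ℝ) : ℝ := binEnt a + (1 - a) * (binEnt ((l - a) / (1 - a)) - 1)

/-!
By the grouping rule for entropy, `H(α) + (1-α) H((λ-α)/(1-α))` is the entropy of the
three-point distribution `(α, λ-α, 1-λ)`, so up to a constant `g_λ(α)` is
`(η(α) + η(λ-α)) / log 2 + α` with `η(x) = -x log x`. Its derivative is `log₂ (2(λ-α)/α)`,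
positive for `α < 2λ/3` and negative for `α > 2λ/3`.
-/

open Real Set

lemma binEnt_eq_binEntropy_div_log (x : ℝ) : binEnt x = binEntropy x / log 2 := by
  simp only [binEnt, binEntropy, logb, log_inv]
  ring

lemma binEntropy_add_mul_binEntropy_div {l a : ℝ} (ha : a ≠ 1) :
    binEntropy a + (1 - a) * binEntropy ((l - a) / (1 - a)) =
      negMulLog a + negMulLog (l - a) + negMulLog (1 - l) := by
  have h1a : 1 - a ≠ 0 := sub_ne_zero.2 ha.symm
  have hη : negMulLog (1 - a) = -(1 - a) * log (1 - a) := rfl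
  have hscale (u : ℝ) : (1 - a) * negMulLog (u / (1 - a)) = negMulLog u + u * log (1 - a) := by
    have h := negMulLog_mul (u / (1 - a)) (1 - a)
    rw [div_mul_cancel₀ u h1a, hη] at h
    have : u / (1 - a) * (-(1 - a) * log (1 - a)) = -(u * log (1 - a)) := by field_simp
    linarith
  have hcompl : 1 - (l - a) / (1 - a) = (1 - l) / (1 - a) := by field_simp; ring
  rw [binEntropy_eq_negMulLog_add_negMulLog_one_sub, binEntropy_eq_negMulLog_add_negMulLog_one_sub,
    hcompl, mul_add, hscale, hscale, hη]
  ring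

lemma gFun_eq_negMulLog {l a : ℝ} (ha : a ≠ 1) :
    gFun l a = (negMulLog a + negMulLog (l - a)) / log 2 + a + (negMulLog (1 - l) / log 2 - 1) := by
  have key := binEntropy_add_mul_binEntropy_div (l := l) ha
  simp only [gFun, binEnt_eq_binEntropy_div_log]
  have hlog : log 2 ≠ 0 := (log_pos one_lt_two).ne'
  field_simp
  linear_combination key

lemma hasDerivAt_negMulLog_add_negMulLog_sub {l a : ℝ} (ha : 0 < a) (hal : a < l) :
    HasDerivAt (fun x ↦ (negMulLog x + negMulLog (l - x)) / log 2 + x)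
      (logb 2 (2 * (l - a) / a)) a := by
  have hla : 0 < l - a := sub_pos.2 hal
  have hsub : HasDerivAt (fun x ↦ negMulLog (l - x)) (-(-log (l - a) - 1)) a :=
    ((hasDerivAt_negMulLog hla.ne').comp a ((hasDerivAt_id a).const_sub l)).congr_deriv (by ring)
  refine ((((hasDerivAt_negMulLog ha.ne').add hsub).div_const (log 2)).add
    (hasDerivAt_id a)).congr_deriv ?_
  rw [← log_div_log, log_div (by positivity) ha.ne', log_mul two_ne_zero hla.ne']
  field_simp [(log_pos one_lt_two).ne']
  ring

lemma apply_lt_of_deriv_pos_of_deriv_neg {f : ℝ → ℝ} {a b m : ℝ} (hm : m ∈ Icc a b)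
    (hf : ContinuousOn f (Icc a b)) (hpos : ∀ x ∈ Ioo a m, 0 < deriv f x)
    (hneg : ∀ x ∈ Ioo m b, deriv f x < 0) {x : ℝ} (hx : x ∈ Icc a b) (hxm : x ≠ m) :
    f x < f m := by
  rcases hxm.lt_or_gt with h | h
  · refine strictMonoOn_of_deriv_pos (convex_Icc a m) (hf.mono (Icc_subset_Icc_right hm.2))
      (by rwa [interior_Icc]) ⟨hx.1, h.le⟩ ⟨hm.1, le_rfl⟩ h
  · refine strictAntiOn_of_deriv_neg (convex_Icc m b) (hf.mono (Icc_subset_Icc_left hm.1))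
      (by rwa [interior_Icc]) ⟨le_rfl, hm.2⟩ ⟨h.le, hx.2⟩ h

/-- The maximum of `g_λ(α)` over `α ∈ (0, λ)` is attained exactly at `α = 2λ/3`. -/
theorem gFun_max_at_two_thirds (l : ℝ) (hl0 : 0 < l) (hl1 : l < 1) :
    2 * l / 3 ∈ Set.Ioo 0 l ∧
    ∀ a ∈ Set.Ioo (0 : ℝ) l, a ≠ 2 * l / 3 → gFun l a < gFun l (2 * l / 3) := by
  have hm : 2 * l / 3 ∈ Ioo 0 l := ⟨by positivity, by linarith⟩
  refine ⟨hm, fun a ha hne ↦ ?_⟩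
  have hderiv {x : ℝ} (hx : x ∈ Ioo 0 l) :=
    (hasDerivAt_negMulLog_add_negMulLog_sub (l := l) hx.1 hx.2).deriv
  rw [gFun_eq_negMulLog (by linarith [ha.2]), gFun_eq_negMulLog (by linarith [hm.2]),
    add_lt_add_iff_right]
  refine apply_lt_of_deriv_pos_of_deriv_neg
    (f := fun x ↦ (negMulLog x + negMulLog (l - x)) / log 2 + x) (Ioo_subset_Icc_self hm)
    (by fun_prop) (fun x hx ↦ ?_) (fun x hx ↦ ?_) (Ioo_subset_Icc_self ha) hne
  · rw [hderiv ⟨hx.1, hx.2.trans hm.2⟩]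
    exact logb_pos one_lt_two ((one_lt_div hx.1).2 (by linarith [hx.2]))
  · rw [hderiv ⟨hm.1.trans hx.1, hx.2⟩]
    exact logb_neg one_lt_two (div_pos (by linarith [hx.2]) (hm.1.trans hx.1))
      ((div_lt_one (hm.1.trans hx.1)).2 (by linarith [hx.1]))
end

section
/- For all α ∈ (0, 1/2), the strict inequality 2·H(α) > H(α) + (1-α)·H(α/(1-α)) holds, where H is the binary entropy function. Equivalently, H(α) > (1-α)·H(α/(1-α)). -/
lemma binEnt_eq_binEntropy_div_log_two (x : ℝ) : binEnt x = Real.binEntropy x / Real.log 2 := by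
  rw [binEnt, Real.binEntropy, Real.log_inv, Real.log_inv, Real.logb, Real.logb]
  ring

lemma Real.mul_binEntropy_lt_binEntropy_mul {c y : ℝ} (hc0 : 0 < c) (hc1 : c < 1)
    (hy0 : 0 < y) (hy1 : y ≤ 1) : c * binEntropy y < binEntropy (c * y) := by
  have chord := strictConcave_binEntropy.2 (x := 0) (y := y) ⟨le_rfl, zero_le_one⟩
    ⟨hy0.le, hy1⟩ hy0.ne (sub_pos.2 hc1) hc0 (sub_add_cancel 1 c)
  simpa only [smul_eq_mul, mul_zero, zero_add, binEntropy_zero] using chord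

lemma mul_binEnt_lt_binEnt_mul {c y : ℝ} (hc0 : 0 < c) (hc1 : c < 1)
    (hy0 : 0 < y) (hy1 : y ≤ 1) : c * binEnt y < binEnt (c * y) := by
  rw [binEnt_eq_binEntropy_div_log_two, binEnt_eq_binEntropy_div_log_two, ← mul_div_assoc]
  exact div_lt_div_of_pos_right (Real.mul_binEntropy_lt_binEntropy_mul hc0 hc1 hy0 hy1)
    (Real.log_pos one_lt_two)

/-- For `α ∈ (0, 1/2)`, `2 H(α) > H(α) + (1-α) H(α/(1-α))`. -/
theorem two_entropy_gt (a : ℝ) (ha0 : 0 < a) (ha2 : a < 1 / 2) :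
    2 * binEnt a > binEnt a + (1 - a) * binEnt (a / (1 - a)) := by
  have h1a : 0 < 1 - a := by linarith
  have key := mul_binEnt_lt_binEnt_mul (c := 1 - a) (y := a / (1 - a)) h1a (by linarith)
    (div_pos ha0 h1a) ((div_le_one h1a).2 (by linarith))
  rw [mul_div_cancel₀ a h1a.ne'] at key
  linarith
end

section
/- Suppose that for every graph G on n vertices there exist two distinct vertex subsets A ≠ A' with |A| = |A'| = a such that |B(A) △ B(A')| ≤ d, where B(S) = {x ∉ S : x has an odd number of neighbors in S}. Then f(G) ≤ 2a + d for every such G, where f(G) = min over nonempty S of |S| + |B(S)|. (Here the improvement uses |A △ A'| ≤ 2a and the vertices outside A △ A' with odd degree into A △ A' lie in (B(A) △ B(A')) ∪ (A ∩ A'), together with |(B(A) △ B(A')) ∪ (A ∩ A')| ≤ d + |A ∩ A'| and |A △ A'| + 2|A ∩ A'| = 2a.) -/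
open scoped symmDiff

lemma card_symmDiff_aux {α : Type*} [DecidableEq α] (s t : Finset α) :
    (s ∆ t).card + 2 * (s ∩ t).card = s.card + t.card := by
  have h1 : s ∆ t = (s \ t) ∪ (t \ s) := rfl
  have hd : Disjoint (s \ t) (t \ s) := disjoint_sdiff_sdiff
  have h2 : (s ∆ t).card = (s \ t).card + (t \ s).card := by
    rw [h1, Finset.card_union_of_disjoint hd]
  have h3 : (s ∩ t).card + (s \ t).card = s.card := Finset.card_inter_add_card_sdiff s t
  have h4 : (t ∩ s).card + (t \ s).card = t.card := Finset.card_inter_add_card_sdiff t s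
  rw [Finset.inter_comm] at h4
  omega

/-- If there are two distinct sets `A ≠ A'` of size `a` with
`|B(A) △ B(A')| ≤ d`, then `f(G) ≤ 2a + d`. -/
theorem diag_dist_le_two_a_add_d {V : Type*} [Fintype V] [DecidableEq V]
    (G : SimpleGraph V) [DecidableRel G.Adj] (a d : ℕ)
    (h : ∃ A A' : Finset V, A ≠ A' ∧ A.card = a ∧ A'.card = a ∧
      ((oddNbrs G A) ∆ (oddNbrs G A')).card ≤ d) :
    ∃ S : Finset V, S.Nonempty ∧ S.card + (oddNbrs G S).card ≤ 2 * a + d := by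
  obtain ⟨A, A', hne, hA, hA', hd⟩ := h
  refine ⟨A ∆ A', Finset.symmDiff_nonempty.mpr hne, ?_⟩
  have hsub : oddNbrs G (A ∆ A') ⊆ (oddNbrs G A ∆ oddNbrs G A') ∪ (A ∩ A') := by
    intro x hx
    simp only [oddNbrs, Finset.mem_filter, Finset.mem_univ, true_and] at hx
    obtain ⟨hxnot, hxodd⟩ := hx
    rw [Finset.mem_union]
    by_cases hxi : x ∈ A ∩ A'
    · exact Or.inr hxi
    · left
      have hxA : x ∉ A ∧ x ∉ A' := by
        rw [Finset.mem_symmDiff] at hxnot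
        rw [Finset.mem_inter] at hxi
        tauto
      have hfilt : (A ∆ A').filter (G.Adj x) = (A.filter (G.Adj x)) ∆ (A'.filter (G.Adj x)) := by
        ext y
        simp only [Finset.mem_filter, Finset.mem_symmDiff]
        tauto
      have hcard := card_symmDiff_aux (A.filter (G.Adj x)) (A'.filter (G.Adj x))
      rw [hfilt] at hxodd
      have hpar : Odd ((A.filter (G.Adj x)).card) ↔ ¬ Odd ((A'.filter (G.Adj x)).card) := by
        rcases hxodd with ⟨k, hk⟩
        rcases Nat.even_or_odd ((A.filter (G.Adj x)).card) with he | ho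
        · rcases he with ⟨m, hm⟩
          constructor
          · intro hoo; exact absurd ⟨m, hm⟩ (Nat.not_even_iff_odd.mpr hoo)
          · intro hno
            exfalso
            rcases Nat.even_or_odd ((A'.filter (G.Adj x)).card) with ⟨p, hp⟩ | ho'
            · omega
            · exact hno ho'
        · rcases ho with ⟨m, hm⟩
          constructor
          · intro _ ho'
            rcases ho' with ⟨p, hp⟩
            omega
          · intro _; exact ⟨m, hm⟩
      rw [Finset.mem_symmDiff]
      simp only [oddNbrs, Finset.mem_filter, Finset.mem_univ, true_and]
      rcases Nat.even_or_odd ((A.filter (G.Adj x)).card) with he | ho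
      · right
        have ho' : Odd ((A'.filter (G.Adj x)).card) := by
          by_contra hn
          exact Nat.not_odd_iff_even.mpr he (hpar.mpr hn)
        exact ⟨⟨hxA.2, ho'⟩, fun hc => (Nat.not_odd_iff_even.mpr he) hc.2⟩
      · left
        exact ⟨⟨hxA.1, ho⟩, fun hc => (hpar.mp ho) hc.2⟩
  have h1 : (oddNbrs G (A ∆ A')).card ≤ ((oddNbrs G A ∆ oddNbrs G A') ∪ (A ∩ A')).card :=
    Finset.card_le_card hsub
  have h2 : ((oddNbrs G A ∆ oddNbrs G A') ∪ (A ∩ A')).card ≤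
      (oddNbrs G A ∆ oddNbrs G A').card + (A ∩ A').card := Finset.card_union_le _ _
  have h3 := card_symmDiff_aux A A'
  omega
end
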